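/- arXiv:2410.01432 — 3 statements merged into one kernel-verified Lean document; each statement's English description precedes it below -/
import Mathlib

section
/- Suppose the trajectory-balance discrepancy vanishes on every trajectory, i.e. δ(τ) = log R(end(τ)) + log P_B(τ) − log Z − log P_F(τ) = 0 for all τ ∈ T. Then for every terminal state x ∈ X, the terminating distribution satisfies P_F^⊤(x) = R(x) / (∑_{x'∈X} R(x')), i.e. the forward policy samples terminal states with probability proportional to the reward. -/
/-!
Vanishing discrepancy means `P_F(τ) = c R(end τ) P_B(τ)` for every trajectory, with `c = exp (-log Z)`.
Summing over the trajectories ending in `x`, where `P_B` sums to one, gives `P_F^⊤(x) = c R(x)`;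
summing once more over `x`, where `P_F` sums to one, forces `c = 1 / ∑ R`.
-/

open Finset Real

lemma eq_exp_neg_mul_of_tb_discrepancy_eq_zero {r b p s : ℝ} (hr : 0 < r) (hb : 0 < b)
    (hp : 0 < p) (h : log r + log b - s - log p = 0) : p = exp (-s) * (r * b) := by
  have hlog : log p = -s + log (r * b) := by rw [log_mul hr.ne' hb.ne']; linarith
  rw [← exp_log hp, hlog, exp_add, exp_log (mul_pos hr hb)]

section Fibers

variable {X T : Type*} [DecidableEq X] (endT : T → X)

lemma sum_fiber_eq_mul_of_eq_mul_backward [Fintype T] {PF PB : T → ℝ} {R : X → ℝ} (c : ℝ)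
    (hPF : ∀ τ, PF τ = c * (R (endT τ) * PB τ))
    (hPBsum : ∀ x, ∑ τ ∈ univ.filter (fun τ => endT τ = x), PB τ = 1) (x : X) :
    ∑ τ ∈ univ.filter (fun τ => endT τ = x), PF τ = c * R x := by
  calc ∑ τ ∈ univ.filter (fun τ => endT τ = x), PF τ
      = ∑ τ ∈ univ.filter (fun τ => endT τ = x), c * R x * PB τ :=
        sum_congr rfl fun τ hτ => by rw [hPF, (mem_filter.mp hτ).2, mul_assoc]
    _ = c * R x := by rw [← mul_sum, hPBsum, mul_one]

lemma sum_fiber_eq_div_sum_of_eq_mul [Fintype X] [Fintype T] {PF : T → ℝ} {R : X → ℝ}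
    (hPFsum : ∑ τ, PF τ = 1) (c : ℝ)
    (hfiber : ∀ x, ∑ τ ∈ univ.filter (fun τ => endT τ = x), PF τ = c * R x) (x : X) :
    ∑ τ ∈ univ.filter (fun τ => endT τ = x), PF τ = R x / ∑ x', R x' := by
  have hc : c * ∑ x', R x' = 1 := by
    rw [← hPFsum, ← sum_fiberwise univ endT PF, mul_sum]
    exact sum_congr rfl fun x _ => (hfiber x).symm
  rw [hfiber, eq_div_iff (right_ne_zero_of_mul_eq_one hc), mul_right_comm, hc, one_mul]

end Fibers

theorem tb_zero_implies_reward_matching_general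
    {X T : Type*} [Fintype X] [Fintype T]
    [DecidableEq X]
    (endT : T → X)
    (PF : T → ℝ) (hPFpos : ∀ τ, 0 < PF τ) (hPFsum : ∑ τ, PF τ = 1)
    (PB : T → ℝ) (hPBpos : ∀ τ, 0 < PB τ)
    (hPBsum : ∀ x : X, ∑ τ ∈ Finset.univ.filter (fun τ => endT τ = x), PB τ = 1)
    (R : X → ℝ) (hR : ∀ x, 0 < R x)
    (Z : ℝ)
    (hδ : ∀ τ, Real.log (R (endT τ)) + Real.log (PB τ)
            - Real.log Z - Real.log (PF τ) = 0) :
    ∀ x : X, ∑ τ ∈ Finset.univ.filter (fun τ => endT τ = x), PF τ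
      = R x / ∑ x' : X, R x' := by
  have hPF : ∀ τ, PF τ = exp (-log Z) * (R (endT τ) * PB τ) := fun τ =>
    eq_exp_neg_mul_of_tb_discrepancy_eq_zero (hR _) (hPBpos τ) (hPFpos τ) (hδ τ)
  exact sum_fiber_eq_div_sum_of_eq_mul endT hPFsum _
    (sum_fiber_eq_mul_of_eq_mul_backward endT _ hPF hPBsum)

/-- If the trajectory-balance discrepancy vanishes on every
trajectory, then the terminating distribution of the forward policy samples
terminal states with probability proportional to the reward. -/
theorem tb_zero_implies_reward_matching
    {X T : Type*} [Fintype X] [Fintype T] [Nonempty X] [Nonempty T]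
    [DecidableEq X]
    (endT : T → X) (hend : Function.Surjective endT)
    (PF : T → ℝ) (hPFpos : ∀ τ, 0 < PF τ) (hPFsum : ∑ τ, PF τ = 1)
    (PB : T → ℝ) (hPBpos : ∀ τ, 0 < PB τ)
    (hPBsum : ∀ x : X, ∑ τ ∈ Finset.univ.filter (fun τ => endT τ = x), PB τ = 1)
    (R : X → ℝ) (hR : ∀ x, 0 < R x)
    (Z : ℝ) (hZ : 0 < Z)
    (hδ : ∀ τ, Real.log (R (endT τ)) + Real.log (PB τ)
            - Real.log Z - Real.log (PF τ) = 0) :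
    ∀ x : X, ∑ τ ∈ Finset.univ.filter (fun τ => endT τ = x), PF τ
      = R x / ∑ x' : X, R x' :=
  tb_zero_implies_reward_matching_general endT PF hPFpos hPFsum PB hPBpos hPBsum R hR Z hδ
end

section
/- Suppose the trajectory-balance discrepancy vanishes on every trajectory, i.e. δ(τ) = log R(end(τ)) + log P_B(τ) − log Z − log P_F(τ) = 0 for all τ ∈ T. Then the normalization constant is forced to equal the total reward: Z = ∑_{x∈X} R(x). -/
open Finset

theorem Real.mul_eq_mul_of_log_add_sub_sub_eq_zero {a b c d : ℝ}
    (ha : 0 < a) (hb : 0 < b) (hc : 0 < c) (hd : 0 < d)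
    (h : Real.log a + Real.log b - Real.log c - Real.log d = 0) :
    c * d = a * b := by
  have hlog : Real.log (c * d) = Real.log (a * b) := by
    rw [Real.log_mul hc.ne' hd.ne', Real.log_mul ha.ne' hb.ne']
    linarith
  exact Real.log_injOn_pos (mul_pos hc hd) (mul_pos ha hb) hlog

theorem Finset.sum_comp_mul_eq_sum_of_sum_fiber_eq_one
    {ι κ R : Type*} [Fintype ι] [Fintype κ] [DecidableEq κ] [CommSemiring R]
    (f : ι → κ) (g : κ → R) (w : ι → R)
    (hw : ∀ k, ∑ i ∈ univ.filter (fun i => f i = k), w i = 1) :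
    ∑ i, g (f i) * w i = ∑ k, g k := by
  rw [← Finset.sum_fiberwise univ f]
  refine Finset.sum_congr rfl fun k _ => ?_
  calc ∑ i ∈ univ.filter (fun i => f i = k), g (f i) * w i
      = ∑ i ∈ univ.filter (fun i => f i = k), g k * w i :=
        Finset.sum_congr rfl fun i hi => by rw [(Finset.mem_filter.mp hi).2]
    _ = g k := by rw [← Finset.mul_sum, hw, mul_one]

theorem tb_zero_implies_Z_eq_total_reward_general
    {X T : Type*} [Fintype X] [Fintype T]
    [DecidableEq X]
    (endT : T → X)
    (PF : T → ℝ) (hPFpos : ∀ τ, 0 < PF τ) (hPFsum : ∑ τ, PF τ = 1)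
    (PB : T → ℝ) (hPBpos : ∀ τ, 0 < PB τ)
    (hPBsum : ∀ x : X, ∑ τ ∈ Finset.univ.filter (fun τ => endT τ = x), PB τ = 1)
    (R : X → ℝ) (hR : ∀ x, 0 < R x)
    (Z : ℝ) (hZ : 0 < Z)
    (hδ : ∀ τ, Real.log (R (endT τ)) + Real.log (PB τ)
            - Real.log Z - Real.log (PF τ) = 0) :
    Z = ∑ x : X, R x := by
  have balance : ∀ τ, Z * PF τ = R (endT τ) * PB τ := fun τ =>
    Real.mul_eq_mul_of_log_add_sub_sub_eq_zero (hR _) (hPBpos τ) hZ (hPFpos τ) (hδ τ)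
  calc Z = ∑ τ, Z * PF τ := by rw [← Finset.mul_sum, hPFsum, mul_one]
    _ = ∑ τ, R (endT τ) * PB τ := Finset.sum_congr rfl fun τ _ => balance τ
    _ = ∑ x, R x := Finset.sum_comp_mul_eq_sum_of_sum_fiber_eq_one endT R PB hPBsum

/-- If the trajectory-balance discrepancy vanishes on every
trajectory, then the normalization constant equals the total reward. -/
theorem tb_zero_implies_Z_eq_total_reward
    {X T : Type*} [Fintype X] [Fintype T] [Nonempty X] [Nonempty T]
    [DecidableEq X]
    (endT : T → X) (hend : Function.Surjective endT)
    (PF : T → ℝ) (hPFpos : ∀ τ, 0 < PF τ) (hPFsum : ∑ τ, PF τ = 1)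
    (PB : T → ℝ) (hPBpos : ∀ τ, 0 < PB τ)
    (hPBsum : ∀ x : X, ∑ τ ∈ Finset.univ.filter (fun τ => endT τ = x), PB τ = 1)
    (R : X → ℝ) (hR : ∀ x, 0 < R x)
    (Z : ℝ) (hZ : 0 < Z)
    (hδ : ∀ τ, Real.log (R (endT τ)) + Real.log (PB τ)
            - Real.log Z - Real.log (PF τ) = 0) :
    Z = ∑ x : X, R x :=
  tb_zero_implies_Z_eq_total_reward_general endT PF hPFpos hPFsum PB hPBpos hPBsum R hR Z hZ hδ
end

section
/- (Proposition on the stationary point of Teacher–Student training.) Let P_β : T → ℝ be a behavior policy with full support, i.e. P_β(τ) > 0 for all τ ∈ T and ∑_{τ∈T} P_β(τ) = 1. Let the Student be a forward trajectory distribution P_F^S with normalization constant Z_S > 0 and reward R, and let the Teacher be a forward trajectory distribution P_F^T with normalization constant Z_T > 0 and reward R_Teacher(x) = ε·R(x)^α for constants ε > 0 and α > 0, both with respect to the same backward kernel P_B. If the expected squared TB losses under the behavior policy are both zero, i.e. ∑_{τ∈T} P_β(τ)·δ_S(τ)² = 0 and ∑_{τ∈T} P_β(τ)·δ_T(τ)²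 = 0, where δ_S is the TB discrepancy of (P_F^S, Z_S) with reward R and δ_T is the TB discrepancy of (P_F^T, Z_T) with reward R_Teacher, then: (a) the Student's terminating distribution satisfies (P_F^S)^⊤(x) = R(x)/(∑_{x'∈X} R(x')) for all x ∈ X, and (b) the Teacher's terminating distribution satisfies (P_F^T)^⊤(x) = R(x)^α/(∑_{x'∈X} R(x')^α) for all x ∈ X. -/
/-!
A weighted sum of squares with positive weights vanishes only if every term does, so zero expected
loss under a full-support behavior policy forces the TB discrepancy to vanish on every trajectory.
Exponentiating, `P_F(τ) = r(end τ) · P_B(τ) / Z`; summing over the fibre of `x` and using that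
`P_B` is normalized on fibres gives `P_F^⊤(x) = r(x) / Z`, and summing over `x` shows
`Z = ∑ r`. Applied with `r = R` and `r = ε R^α`, where `ε` cancels, this gives both claims.
-/

open Finset Real

theorem eq_zero_of_sum_mul_sq_eq_zero {ι : Type*} [Fintype ι] {w f : ι → ℝ}
    (hw : ∀ i, 0 < w i) (hsum : ∑ i, w i * f i ^ 2 = 0) (i : ι) : f i = 0 := by
  have hterm := (sum_eq_zero_iff_of_nonneg fun j _ => mul_nonneg (hw j).le (sq_nonneg (f j))).mp
    hsum i (mem_univ i)
  simpa [(hw i).ne'] using hterm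

section TrajectoryBalance

variable {X T : Type*} (endT : T → X)

noncomputable def tbDiscrepancy (PB PF : T → ℝ) (Z : ℝ) (r : X → ℝ) (τ : T) : ℝ :=
  log (r (endT τ)) + log (PB τ) - log Z - log (PF τ)

def terminating [Fintype T] [DecidableEq X] (PF : T → ℝ) (x : X) : ℝ :=
  ∑ τ ∈ univ.filter (fun τ => endT τ = x), PF τ

variable {endT}

theorem eq_mul_div_of_tbDiscrepancy_eq_zero {PB PF : T → ℝ} {Z : ℝ} {r : X → ℝ} {τ : T}
    (hPB : 0 < PB τ) (hPF : 0 < PF τ) (hZ : 0 < Z) (hr : 0 < r (endT τ))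
    (hδ : tbDiscrepancy endT PB PF Z r τ = 0) :
    PF τ = r (endT τ) * PB τ / Z := by
  have hpos : 0 < r (endT τ) * PB τ / Z := by positivity
  refine log_injOn_pos hPF hpos ?_
  rw [log_div (by positivity) hZ.ne', log_mul hr.ne' hPB.ne']
  unfold tbDiscrepancy at hδ
  linarith

theorem terminating_eq_of_eq_mul [Fintype T] [DecidableEq X] {PB PF : T → ℝ} {c : X → ℝ}
    (hPBsum : ∀ x, terminating endT PB x = 1) (hPF : ∀ τ, PF τ = c (endT τ) * PB τ)
    (x : X) : terminating endT PF x = c x := by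
  calc terminating endT PF x
      = ∑ τ ∈ univ.filter (fun τ => endT τ = x), c x * PB τ :=
        sum_congr rfl fun τ hτ => by rw [hPF τ, (mem_filter.mp hτ).2]
    _ = c x := by rw [← mul_sum, ← terminating, hPBsum x, mul_one]

theorem sum_terminating [Fintype X] [Fintype T] [DecidableEq X] (PF : T → ℝ) :
    ∑ x, terminating endT PF x = ∑ τ, PF τ :=
  sum_fiberwise univ endT PF

theorem terminating_eq_div_sum_of_tbDiscrepancy_eq_zero [Fintype X] [Fintype T] [DecidableEq X]
    {PB PF : T → ℝ} {Z : ℝ} {r : X → ℝ}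
    (hPB : ∀ τ, 0 < PB τ) (hPBsum : ∀ x, terminating endT PB x = 1)
    (hPF : ∀ τ, 0 < PF τ) (hPFsum : ∑ τ, PF τ = 1) (hZ : 0 < Z) (hr : ∀ x, 0 < r x)
    (hδ : ∀ τ, tbDiscrepancy endT PB PF Z r τ = 0) (x : X) :
    terminating endT PF x = r x / ∑ x', r x' := by
  have hfibre : ∀ x, terminating endT PF x = r x / Z :=
    terminating_eq_of_eq_mul hPBsum fun τ => by
      rw [eq_mul_div_of_tbDiscrepancy_eq_zero (hPB τ) (hPF τ) hZ (hr _) (hδ τ)]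
      ring
  have hZsum : Z = ∑ x', r x' := by
    have h := sum_terminating (endT := endT) PF
    simp only [hfibre, ← sum_div, hPFsum] at h
    exact ((div_eq_one_iff_eq hZ.ne').mp h).symm
  rw [hfibre, hZsum]

end TrajectoryBalance

theorem teacher_student_stationary_point_general
    {X T : Type*} [Fintype X] [Fintype T]
    [DecidableEq X]
    (endT : T → X)
    -- behavior policy with full support
    (Pβ : T → ℝ) (hPβpos : ∀ τ, 0 < Pβ τ)
    -- Student forward distribution and normalization constant
    (PFS : T → ℝ) (hPFSpos : ∀ τ, 0 < PFS τ) (hPFSsum : ∑ τ, PFS τ = 1)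
    (ZS : ℝ) (hZS : 0 < ZS)
    -- Teacher forward distribution and normalization constant
    (PFT : T → ℝ) (hPFTpos : ∀ τ, 0 < PFT τ) (hPFTsum : ∑ τ, PFT τ = 1)
    (ZT : ℝ) (hZT : 0 < ZT)
    -- shared backward kernel
    (PB : T → ℝ) (hPBpos : ∀ τ, 0 < PB τ)
    (hPBsum : ∀ x : X, ∑ τ ∈ Finset.univ.filter (fun τ => endT τ = x), PB τ = 1)
    -- reward and constants
    (R : X → ℝ) (hR : ∀ x, 0 < R x)
    (ε : ℝ) (hε : 0 < ε) (α : ℝ)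
    -- zero expected squared TB losses
    (hS : ∑ τ, Pβ τ * (Real.log (R (endT τ)) + Real.log (PB τ)
            - Real.log ZS - Real.log (PFS τ)) ^ 2 = 0)
    (hT : ∑ τ, Pβ τ * (Real.log (ε * R (endT τ) ^ α) + Real.log (PB τ)
            - Real.log ZT - Real.log (PFT τ)) ^ 2 = 0) :
    (∀ x : X, ∑ τ ∈ Finset.univ.filter (fun τ => endT τ = x), PFS τ
        = R x / ∑ x' : X, R x')
    ∧ (∀ x : X, ∑ τ ∈ Finset.univ.filter (fun τ => endT τ = x), PFT τ
        = R x ^ α / ∑ x' : X, R x' ^ α) := by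
  have hδS : ∀ τ, tbDiscrepancy endT PB PFS ZS R τ = 0 :=
    eq_zero_of_sum_mul_sq_eq_zero hPβpos hS
  have hδT : ∀ τ, tbDiscrepancy endT PB PFT ZT (fun x => ε * R x ^ α) τ = 0 :=
    eq_zero_of_sum_mul_sq_eq_zero hPβpos hT
  refine ⟨terminating_eq_div_sum_of_tbDiscrepancy_eq_zero hPBpos hPBsum hPFSpos hPFSsum hZS hR
    hδS, fun x => ?_⟩
  have hteacher := terminating_eq_div_sum_of_tbDiscrepancy_eq_zero hPBpos hPBsum hPFTpos hPFTsum
    hZT (fun x => mul_pos hε (rpow_pos_of_pos (hR x) α)) hδT x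
  rwa [← mul_sum, mul_div_mul_left _ _ hε.ne'] at hteacher

/-- Stationary point of Teacher–Student training. If the expected
squared TB losses of the Student (with reward `R`) and the Teacher (with
reward `ε · R(x)^α`) both vanish under a full-support behavior policy, then
the Student samples proportionally to `R` and the Teacher proportionally
to `R^α`. -/
theorem teacher_student_stationary_point
    {X T : Type*} [Fintype X] [Fintype T] [Nonempty X] [Nonempty T]
    [DecidableEq X]
    (endT : T → X) (hend : Function.Surjective endT)
    -- behavior policy with full support
    (Pβ : T → ℝ) (hPβpos : ∀ τ, 0 < Pβ τ) (hPβsum : ∑ τ, Pβ τ = 1)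
    -- Student forward distribution and normalization constant
    (PFS : T → ℝ) (hPFSpos : ∀ τ, 0 < PFS τ) (hPFSsum : ∑ τ, PFS τ = 1)
    (ZS : ℝ) (hZS : 0 < ZS)
    -- Teacher forward distribution and normalization constant
    (PFT : T → ℝ) (hPFTpos : ∀ τ, 0 < PFT τ) (hPFTsum : ∑ τ, PFT τ = 1)
    (ZT : ℝ) (hZT : 0 < ZT)
    -- shared backward kernel
    (PB : T → ℝ) (hPBpos : ∀ τ, 0 < PB τ)
    (hPBsum : ∀ x : X, ∑ τ ∈ Finset.univ.filter (fun τ => endT τ = x), PB τ = 1)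
    -- reward and constants
    (R : X → ℝ) (hR : ∀ x, 0 < R x)
    (ε : ℝ) (hε : 0 < ε) (α : ℝ) (hα : 0 < α)
    -- zero expected squared TB losses
    (hS : ∑ τ, Pβ τ * (Real.log (R (endT τ)) + Real.log (PB τ)
            - Real.log ZS - Real.log (PFS τ)) ^ 2 = 0)
    (hT : ∑ τ, Pβ τ * (Real.log (ε * R (endT τ) ^ α) + Real.log (PB τ)
            - Real.log ZT - Real.log (PFT τ)) ^ 2 = 0) :
    (∀ x : X, ∑ τ ∈ Finset.univ.filter (fun τ => endT τ = x), PFS τ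
        = R x / ∑ x' : X, R x')
    ∧ (∀ x : X, ∑ τ ∈ Finset.univ.filter (fun τ => endT τ = x), PFT τ
        = R x ^ α / ∑ x' : X, R x' ^ α) :=
  teacher_student_stationary_point_general endT Pβ hPβpos PFS hPFSpos hPFSsum ZS hZS PFT hPFTpos
    hPFTsum ZT hZT PB hPBpos hPBsum R hR ε hε α hS hT
end
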